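/- Let H be a graph and R ⊆ V(H) an independent set of H. Suppose H₁ is a proper induced subgraph of H containing R, and let H₂ := H with the edges of H₁ removed. Then the maximum rooted 2-density satisfies m₂(H,R) ≤ max{ m₂(H₁,R), m₂(H₂,V(H₁)) }. -/

import Mathlib

/-!
Split a subgraph `F` of `H` into its edges inside `S`, a subgraph of `H₁` on `V(F) ∩ S`, and
the remaining edges, a subgraph of `H₂` on `V(F)`. Edge counts add up, and since `R ⊆ S` the
unrooted vertices split as `(V(F) ∩ S) \ R` and `V(F) \ S`, so `e(F) / |V(F) \ R|` is a mediant
of two ratios bounded by `m(H₁,R)` and `m(H₂,S)`. For the 2-density, the `-1` and `-2` go to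
the part inside `S`: if it has an edge then `e₁ - 1 ≤ m₂(H₁) (v₁ - 2)` (trivially when
`v₁ = 2`), and otherwise `F` is already a subgraph of `H₂`.
-/

open Finset

variable {V : Type} [Fintype V]

/-- The maximum rooted density `m(H,R)`. -/
noncomputable def rootedDensity (H : SimpleGraph V) (R : Set V) : ℝ :=
  sSup {x : ℝ | ∃ H' : H.Subgraph, (H'.verts \ R).Nonempty ∧
    x = (H'.edgeSet.ncard : ℝ) / ((H'.verts \ R).ncard : ℝ)}

/-- The maximum 2-density `m₂(H)`. -/
noncomputable def density2 (H : SimpleGraph V) : ℝ :=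
  sSup {x : ℝ | ∃ H' : H.Subgraph, 3 ≤ H'.verts.ncard ∧
    x = ((H'.edgeSet.ncard : ℝ) - 1) / ((H'.verts.ncard : ℝ) - 2)}

/-- The maximum rooted 2-density `m₂(H,R) := max { m(H,R), m₂(H) }`. -/
noncomputable def rootedDensity2 (H : SimpleGraph V) (R : Set V) : ℝ :=
  max (rootedDensity H R) (density2 H)

/-- The induced subgraph of `H` on a vertex subset `S`. -/
def inducedOn (H : SimpleGraph V) (S : Set V) : SimpleGraph V where
  Adj u v := H.Adj u v ∧ u ∈ S ∧ v ∈ S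
  symm := ⟨fun u v h => ⟨h.1.symm, h.2.2, h.2.1⟩⟩
  loopless := ⟨fun u h => H.loopless.irrefl u h.1⟩

/-- The graph `H` with all edges inside `S` removed. -/
def removeWithin (H : SimpleGraph V) (S : Set V) : SimpleGraph V where
  Adj u v := H.Adj u v ∧ ¬(u ∈ S ∧ v ∈ S)
  symm := ⟨fun u v h => ⟨h.1.symm, fun hc => h.2 ⟨hc.2, hc.1⟩⟩⟩
  loopless := ⟨fun u h => H.loopless.irrefl u h.1⟩

lemma bddAbove_setOf_exists_eq {ι : Type*} [Finite ι] (p : ι → Prop) (f : ι → ℝ) :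
    BddAbove {x : ℝ | ∃ i, p i ∧ x = f i} := by
  refine (Set.finite_range f).subset ?_ |>.bddAbove
  rintro _ ⟨i, -, rfl⟩
  exact ⟨i, rfl⟩

lemma div_le_rootedDensity (G : SimpleGraph V) (R : Set V) (F : G.Subgraph)
    (hF : (F.verts \ R).Nonempty) :
    (F.edgeSet.ncard : ℝ) / (F.verts \ R).ncard ≤ rootedDensity G R :=
  le_csSup (bddAbove_setOf_exists_eq _ _) ⟨F, hF, rfl⟩

lemma div_le_density2 (G : SimpleGraph V) (F : G.Subgraph) (hF : 3 ≤ F.verts.ncard) :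
    ((F.edgeSet.ncard : ℝ) - 1) / (F.verts.ncard - 2) ≤ density2 G :=
  le_csSup (bddAbove_setOf_exists_eq _ _) ⟨F, hF, rfl⟩

omit [Fintype V] in
lemma rootedDensity_nonneg (G : SimpleGraph V) (R : Set V) : 0 ≤ rootedDensity G R :=
  Real.sSup_nonneg fun _ ⟨_, _, hx⟩ => hx ▸ by positivity

omit [Fintype V] in
lemma rootedDensity2_nonneg (G : SimpleGraph V) (R : Set V) : 0 ≤ rootedDensity2 G R :=
  (rootedDensity_nonneg G R).trans (le_max_left _ _)

lemma add_div_add_le_max {a b c d M₁ M₂ : ℝ} (ha : a ≤ M₁ * c) (hb : b ≤ M₂ * d)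
    (hc : 0 ≤ c) (hd : 0 ≤ d) (hcd : 0 < c + d) : (a + b) / (c + d) ≤ max M₁ M₂ := by
  rw [div_le_iff₀ hcd, mul_add]
  have := mul_le_mul_of_nonneg_right (le_max_left M₁ M₂) hc
  have := mul_le_mul_of_nonneg_right (le_max_right M₁ M₂) hd
  linarith

namespace SimpleGraph.Subgraph

variable {G : SimpleGraph V}

lemma two_le_ncard_verts {F : G.Subgraph} (hF : F.edgeSet.Nonempty) : 2 ≤ F.verts.ncard := by
  obtain ⟨e, he⟩ := hF
  induction e with
  | h u v =>
    exact (Set.one_lt_ncard).2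
      ⟨u, F.edge_vert he, v, F.edge_vert (F.adj_symm he), (F.adj_sub he).ne⟩

lemma ncard_edgeSet_le_one {F : G.Subgraph} (hF : F.verts.ncard = 2) : F.edgeSet.ncard ≤ 1 := by
  obtain ⟨a, b, hab, hverts⟩ := Set.ncard_eq_two.1 hF
  refine (Set.ncard_le_ncard (t := {s(a, b)}) ?_).trans (Set.ncard_singleton _).le
  intro e he
  induction e with
  | h u v =>
    have hu := hverts ▸ F.edge_vert he
    have hv := hverts ▸ F.edge_vert (F.adj_symm he)
    have huv := (F.adj_sub he).ne
    simp only [Set.mem_insert_iff, Set.mem_singleton_iff] at hu hv ⊢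
    rcases hu with rfl | rfl <;> rcases hv with rfl | rfl <;> simp_all [Sym2.eq_swap]

lemma ncard_edgeSet_sub_one_le (F : G.Subgraph) (hF : F.edgeSet.Nonempty) :
    (F.edgeSet.ncard : ℝ) - 1 ≤ density2 G * (F.verts.ncard - 2) := by
  rcases (two_le_ncard_verts hF).eq_or_lt with h2 | h3
  · have h1 : F.edgeSet.ncard = 1 :=
      le_antisymm (ncard_edgeSet_le_one h2.symm) ((Set.ncard_pos).2 hF)
    simp [h1, ← h2]
  · have hpos : (0 : ℝ) < F.verts.ncard - 2 := by
      have : (3 : ℝ) ≤ F.verts.ncard := by exact_mod_cast h3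
      linarith
    exact (div_le_iff₀ hpos).1 (div_le_density2 G F h3)

lemma ncard_edgeSet_le_rootedDensity_mul (F : G.Subgraph) {R : Set V}
    (hR : ∀ u ∈ R, ∀ v ∈ R, ¬G.Adj u v) :
    (F.edgeSet.ncard : ℝ) ≤ rootedDensity G R * (F.verts \ R).ncard := by
  rcases (F.verts \ R).eq_empty_or_nonempty with hempty | hne
  · have hnoedge : F.edgeSet = ∅ := by
      refine Set.eq_empty_of_forall_notMem fun e he => ?_
      induction e with
      | h u v =>
        have hsub : F.verts ⊆ R := Set.sdiff_eq_empty.1 hempty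
        exact hR u (hsub (F.edge_vert he)) v (hsub (F.edge_vert (F.adj_symm he))) (F.adj_sub he)
    simp [hnoedge, hempty]
  · exact (div_le_iff₀ (mod_cast (Set.ncard_pos).2 hne)).1 (div_le_rootedDensity G R F hne)

section Split

variable {H : SimpleGraph V} (S : Set V) (F : H.Subgraph)

def toInducedOn : (inducedOn H S).Subgraph where
  verts := F.verts ∩ S
  Adj u v := F.Adj u v ∧ u ∈ S ∧ v ∈ S
  adj_sub h := ⟨F.adj_sub h.1, h.2⟩
  edge_vert h := ⟨F.edge_vert h.1, h.2.1⟩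
  symm := ⟨fun _ _ h => ⟨F.adj_symm h.1, h.2.2, h.2.1⟩⟩

def toRemoveWithin : (removeWithin H S).Subgraph where
  verts := F.verts
  Adj u v := F.Adj u v ∧ ¬(u ∈ S ∧ v ∈ S)
  adj_sub h := ⟨F.adj_sub h.1, h.2⟩
  edge_vert h := F.edge_vert h.1
  symm := ⟨fun _ _ h => ⟨F.adj_symm h.1, fun hS => h.2 ⟨hS.2, hS.1⟩⟩⟩

omit [Fintype V] in
lemma edgeSet_toInducedOn_subset : (F.toInducedOn S).edgeSet ⊆ F.edgeSet := by
  rintro ⟨u, v⟩ h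
  exact h.1

omit [Fintype V] in
lemma edgeSet_toRemoveWithin :
    (F.toRemoveWithin S).edgeSet = F.edgeSet \ (F.toInducedOn S).edgeSet := by
  ext ⟨u, v⟩
  change F.Adj u v ∧ _ ↔ F.Adj u v ∧ ¬(F.Adj u v ∧ _)
  tauto

lemma ncard_edgeSet_toInducedOn_add_toRemoveWithin :
    (F.toInducedOn S).edgeSet.ncard + (F.toRemoveWithin S).edgeSet.ncard = F.edgeSet.ncard := by
  rw [edgeSet_toRemoveWithin, add_comm]
  exact Set.ncard_sdiff_add_ncard_of_subset (F.edgeSet_toInducedOn_subset S)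

end Split

end SimpleGraph.Subgraph

open SimpleGraph.Subgraph

lemma ncard_sdiff_eq_ncard_inter_sdiff_add_ncard_sdiff (s : Set V) {R S : Set V} (hRS : R ⊆ S) :
    (s \ R).ncard = ((s ∩ S) \ R).ncard + (s \ S).ncard := by
  rw [← Set.ncard_inter_add_ncard_sdiff_eq_ncard (s \ R) S, Set.sdiff_sdiff,
    Set.union_eq_right.2 hRS, Set.inter_sdiff_right_comm]

theorem rootedDensity_le_max {H : SimpleGraph V} {R S : Set V}
    (hindep : ∀ u ∈ R, ∀ v ∈ R, ¬H.Adj u v) (hRS : R ⊆ S) :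
    rootedDensity H R ≤
      max (rootedDensity (inducedOn H S) R) (rootedDensity (removeWithin H S) S) := by
  refine Real.sSup_le ?_ ((rootedDensity_nonneg _ _).trans (le_max_left _ _))
  rintro _ ⟨F, hF, rfl⟩
  have hinner := (F.toInducedOn S).ncard_edgeSet_le_rootedDensity_mul (R := R)
    fun u hu v hv h => hindep u hu v hv h.1
  have houter := (F.toRemoveWithin S).ncard_edgeSet_le_rootedDensity_mul (R := S)
    fun u hu v hv h => h.2 ⟨hu, hv⟩
  have hpos : (0 : ℝ) < (F.verts \ R).ncard := mod_cast (Set.ncard_pos).2 hF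
  rw [ncard_sdiff_eq_ncard_inter_sdiff_add_ncard_sdiff _ hRS] at hpos ⊢
  rw [← F.ncard_edgeSet_toInducedOn_add_toRemoveWithin S]
  push_cast at hpos ⊢
  exact add_div_add_le_max hinner houter (by positivity) (by positivity) hpos

theorem density2_le_max (H : SimpleGraph V) (S : Set V) :
    density2 H ≤ max (density2 (inducedOn H S)) (rootedDensity2 (removeWithin H S) S) := by
  refine Real.sSup_le ?_ ((rootedDensity2_nonneg _ _).trans (le_max_right _ _))
  rintro _ ⟨F, hF, rfl⟩
  have hsplit := F.ncard_edgeSet_toInducedOn_add_toRemoveWithin S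
  rcases (F.toInducedOn S).edgeSet.eq_empty_or_nonempty with hempty | hinner
  · have hsame : (F.toRemoveWithin S).edgeSet.ncard = F.edgeSet.ncard := by
      simpa [hempty] using hsplit
    calc ((F.edgeSet.ncard : ℝ) - 1) / (F.verts.ncard - 2)
        = (((F.toRemoveWithin S).edgeSet.ncard : ℝ) - 1) /
            ((F.toRemoveWithin S).verts.ncard - 2) := by rw [hsame]; rfl
      _ ≤ density2 (removeWithin H S) := div_le_density2 _ _ hF
      _ ≤ _ := (le_max_right _ _).trans (le_max_right _ _)
  · have hverts := Set.ncard_inter_add_ncard_sdiff_eq_ncard F.verts S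
    have hinner' := (F.toInducedOn S).ncard_edgeSet_sub_one_le hinner
    have houter := (F.toRemoveWithin S).ncard_edgeSet_le_rootedDensity_mul (R := S)
      fun u hu v hv h => h.2 ⟨hu, hv⟩
    have htwo : (2 : ℝ) ≤ (F.verts ∩ S).ncard := mod_cast two_le_ncard_verts hinner
    have hthree : (3 : ℝ) ≤ F.verts.ncard := mod_cast hF
    have hverts' : ((F.verts ∩ S).ncard : ℝ) + (F.verts \ S).ncard = F.verts.ncard :=
      mod_cast hverts
    calc ((F.edgeSet.ncard : ℝ) - 1) / (F.verts.ncard - 2)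
        = (((F.toInducedOn S).edgeSet.ncard - 1) + (F.toRemoveWithin S).edgeSet.ncard) /
            (((F.verts ∩ S).ncard - 2) + (F.verts \ S).ncard) := by
          rw [← hsplit, ← hverts]; push_cast; ring_nf
      _ ≤ max (density2 (inducedOn H S)) (rootedDensity (removeWithin H S) S) :=
          add_div_add_le_max hinner' houter (by linarith) (by positivity) (by linarith)
      _ ≤ _ := max_le_max le_rfl (le_max_left _ _)

theorem rootedDensity2_concatenate_general (H : SimpleGraph V) (R S : Set V)
    (hindep : ∀ u ∈ R, ∀ v ∈ R, ¬H.Adj u v)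
    (hRS : R ⊆ S) :
    rootedDensity2 H R ≤
      max (rootedDensity2 (inducedOn H S) R) (rootedDensity2 (removeWithin H S) S) :=
  max_le ((rootedDensity_le_max hindep hRS).trans (max_le_max (le_max_left _ _) (le_max_left _ _)))
    ((density2_le_max H S).trans (max_le_max (le_max_right _ _) le_rfl))

/-- If `R` is an independent set of `H`, `H₁` is a proper induced subgraph of `H`
(on vertex set `S`) containing `R`, and `H₂ = H` minus the edges of `H₁`, then
`m₂(H,R) ≤ max { m₂(H₁,R), m₂(H₂, V(H₁)) }`. -/
theorem rootedDensity2_concatenate (H : SimpleGraph V) (R S : Set V)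
    (hindep : ∀ u ∈ R, ∀ v ∈ R, ¬H.Adj u v)
    (hRS : R ⊆ S) (hproper : S ≠ Set.univ) :
    rootedDensity2 H R ≤
      max (rootedDensity2 (inducedOn H S) R) (rootedDensity2 (removeWithin H S) S) :=
  rootedDensity2_concatenate_general H R S hindep hRS
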